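/- arXiv:1312.0065 — 8 statements merged into one kernel-verified Lean document; each statement's English description precedes it below -/
import Mathlib

section
/- For a random walk on a connected simple graph G with n vertices, the hitting time H(x,y) from any vertex x to any vertex y satisfies H(x,y) ≤ (n-1)^3. -/
/-- Minimum principle: if `g` is superharmonic off `S` for a connected graph,
its minimum is attained in `S`. -/
lemma min_principle' {V : Type*} [Fintype V] (G : SimpleGraph V) [DecidableRel G.Adj]
    (hG : G.Connected) (g : V → ℝ) (S : Set V) (hS : S.Nonempty)
    (hsup : ∀ x ∉ S, (∑ z ∈ G.neighborFinset x, g z) ≤ (G.degree x : ℝ) * g x)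
    (x : V) : ∃ s ∈ S, g s ≤ g x := by
  obtain ⟨s0, hs0⟩ := hS
  have hne : (Finset.univ : Finset V).Nonempty := ⟨s0, Finset.mem_univ s0⟩
  obtain ⟨x0, -, hx0⟩ := Finset.exists_min_image Finset.univ g hne
  have hx0min : ∀ a : V, g x0 ≤ g a := fun a => hx0 a (Finset.mem_univ a)
  have step : ∀ u : V, g u = g x0 → u ∉ S → ∀ z, G.Adj u z → g z = g x0 := by
    intro u hu huS z hz
    by_contra hne'
    have hlt : g x0 < g z := lt_of_le_of_ne (hx0min z) (fun h => hne' h.symm)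
    have h1 : (∑ _w ∈ G.neighborFinset u, (g x0)) < ∑ w ∈ G.neighborFinset u, g w := by
      refine Finset.sum_lt_sum (fun i _ => hx0min i) ⟨z, ?_, hlt⟩
      rwa [SimpleGraph.mem_neighborFinset]
    have h2 : (∑ _w ∈ G.neighborFinset u, g x0) = (G.degree u : ℝ) * g x0 := by
      rw [Finset.sum_const, SimpleGraph.degree, nsmul_eq_mul]
    have h3 := hsup u huS
    rw [h2] at h1
    rw [hu] at h3
    linarith
  have key : ∀ (u s : V), G.Walk u s → s ∈ S → g u = g x0 → ∃ t ∈ S, g t = g x0 := by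
    intro u s w
    induction w with
    | nil => intro hs hu; exact ⟨_, hs, hu⟩
    | @cons a b c hab q ih =>
      intro hs hu
      by_cases hmem : a ∈ S
      · exact ⟨a, hmem, hu⟩
      · exact ih hs (step a hu hmem b hab)
  obtain ⟨t, htS, ht⟩ := key x0 s0 (hG.preconnected x0 s0).some hs0 rfl
  exact ⟨t, htS, ht ▸ hx0min x⟩

lemma deg_pos' {V : Type*} [Fintype V] (G : SimpleGraph V) [DecidableRel G.Adj]
    (hG : G.Connected) (hcard : 1 < Fintype.card V) (v : V) : 0 < G.degree v := by
  obtain ⟨w, hw⟩ := Fintype.exists_ne_of_one_lt_card hcard v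
  obtain ⟨p⟩ := hG.preconnected v w
  cases p with
  | nil => exact absurd rfl hw
  | cons h q =>
    rw [G.degree_pos_iff_exists_adj]
    exact ⟨_, h⟩

/-- Double counting: summing `f` over neighbors, over all vertices, gives the
degree-weighted sum of `f`. -/
lemma swap_sum' {V : Type*} [Fintype V] (G : SimpleGraph V) [DecidableRel G.Adj] (f : V → ℝ) :
    ∑ x : V, ∑ z ∈ G.neighborFinset x, f z = ∑ z : V, (G.degree z : ℝ) * f z := by
  have h1 : ∀ x : V, ∑ z ∈ G.neighborFinset x, f z
      = ∑ z : V, if G.Adj x z then f z else 0 := by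
    intro x
    rw [SimpleGraph.neighborFinset_eq_filter, Finset.sum_filter]
  simp_rw [h1]
  rw [Finset.sum_comm]
  refine Finset.sum_congr rfl fun z _ => ?_
  have h2 : ∀ x : V, (if G.Adj x z then f z else 0) = (if G.Adj z x then f z else 0) := by
    intro x
    congr 1
    simp only [eq_iff_iff]
    exact G.adj_comm x z
  simp_rw [h2]
  rw [← Finset.sum_filter, ← SimpleGraph.neighborFinset_eq_filter, Finset.sum_const,
    SimpleGraph.degree, nsmul_eq_mul]

/-- `H` is the vector of expected hitting times of the simple random walk on `G`:
`H y y = 0` and for `x ≠ y`, `H x y = 1 + (average of H z y over neighbors z of x)`. -/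
def IsHittingTime {V : Type*} [Fintype V] (G : SimpleGraph V) [DecidableRel G.Adj]
    (H : V → V → ℝ) : Prop :=
  (∀ y, H y y = 0) ∧
  ∀ x y, x ≠ y → H x y = 1 + (∑ z ∈ G.neighborFinset x, H z y) / (G.degree x)

/-- Multiplied form of the hitting-time recurrence. -/
lemma mul_rec' {V : Type*} [Fintype V] (G : SimpleGraph V) [DecidableRel G.Adj]
    (hG : G.Connected) (hcard : 1 < Fintype.card V) {H : V → V → ℝ}
    (hH : IsHittingTime G H) (x y : V) (hxy : x ≠ y) :
    (G.degree x : ℝ) * H x y = G.degree x + ∑ z ∈ G.neighborFinset x, H z y := by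
  have hd : (0:ℝ) < G.degree x := by exact_mod_cast deg_pos' G hG hcard x
  rw [hH.2 x y hxy, mul_add, mul_one, mul_div_cancel₀ _ (ne_of_gt hd)]

lemma H_nonneg' {V : Type*} [Fintype V] (G : SimpleGraph V) [DecidableRel G.Adj]
    (hG : G.Connected) (hcard : 1 < Fintype.card V) {H : V → V → ℝ}
    (hH : IsHittingTime G H) (x y : V) : 0 ≤ H x y := by
  obtain ⟨s, hs, hle⟩ := min_principle' G hG (fun v => H v y) {y} ⟨y, rfl⟩ (by
    intro v hv
    have h := mul_rec' G hG hcard hH v y hv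
    have hd : (0:ℝ) ≤ G.degree v := Nat.cast_nonneg _
    linarith) x
  simp only [Set.mem_singleton_iff] at hs
  rw [hs, hH.1 y] at hle
  exact hle

/-- Sum over neighbors of `y` of hitting times to `y` equals total degree of the
other vertices. -/
lemma edge_sum' {V : Type*} [Fintype V] (G : SimpleGraph V) [DecidableRel G.Adj]
    [DecidableEq V] (hG : G.Connected) (hcard : 1 < Fintype.card V)
    {H : V → V → ℝ} (hH : IsHittingTime G H) (y : V) :
    ∑ z ∈ G.neighborFinset y, H z y
      = ∑ x ∈ Finset.univ.erase y, (G.degree x : ℝ) := by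
  have key : ∀ x ∈ Finset.univ.erase y,
      (G.degree x : ℝ) * H x y = G.degree x + ∑ z ∈ G.neighborFinset x, H z y :=
    fun x hx => mul_rec' G hG hcard hH x y (Finset.ne_of_mem_erase hx)
  have hsumA := Finset.sum_congr rfl key
  have h0 : ∑ x ∈ Finset.univ.erase y, (G.degree x : ℝ) * H x y
      = ∑ x : V, (G.degree x : ℝ) * H x y := by
    rw [← Finset.sum_erase_add _ _ (Finset.mem_univ y), hH.1 y, mul_zero, add_zero]
  have h1 : ∑ x ∈ Finset.univ.erase y, ∑ z ∈ G.neighborFinset x, H z y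
      = (∑ x : V, (G.degree x : ℝ) * H x y) - ∑ z ∈ G.neighborFinset y, H z y := by
    rw [← swap_sum' G (fun v => H v y), ← Finset.sum_erase_add _ _ (Finset.mem_univ y)]
    ring_nf
  rw [Finset.sum_add_distrib, h0, h1] at hsumA
  linarith

/-- hitting time across an edge is at most `(n-1)^2`. -/
lemma H_edge' {V : Type*} [Fintype V] (G : SimpleGraph V) [DecidableRel G.Adj]
    [DecidableEq V] (hG : G.Connected) (hcard : 1 < Fintype.card V)
    {H : V → V → ℝ} (hH : IsHittingTime G H) {u y : V} (h : G.Adj u y) :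
    H u y ≤ ((Fintype.card V : ℝ) - 1) ^ 2 := by
  have h1 : H u y ≤ ∑ z ∈ G.neighborFinset y, H z y := by
    refine Finset.single_le_sum (fun i _ => H_nonneg' G hG hcard hH i y) ?_
    rw [SimpleGraph.mem_neighborFinset]
    exact h.symm
  rw [edge_sum' G hG hcard hH y] at h1
  have h2 : ∑ x ∈ Finset.univ.erase y, (G.degree x : ℝ)
      ≤ ∑ _x ∈ Finset.univ.erase y, ((Fintype.card V : ℝ) - 1) := by
    refine Finset.sum_le_sum fun i _ => ?_
    have h4 : G.degree i + 1 ≤ Fintype.card V := G.degree_lt_card_verts i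
    have h5 : (G.degree i : ℝ) + 1 ≤ Fintype.card V := by exact_mod_cast h4
    linarith
  rw [Finset.sum_const, Finset.card_erase_of_mem (Finset.mem_univ y), Finset.card_univ,
    nsmul_eq_mul] at h2
  have h3 : ((Fintype.card V - 1 : ℕ) : ℝ) = (Fintype.card V : ℝ) - 1 := by
    have : 1 ≤ Fintype.card V := le_of_lt hcard
    push_cast [this]
    ring
  rw [h3] at h2
  calc H u y ≤ _ := h1
    _ ≤ _ := h2
    _ = ((Fintype.card V : ℝ) - 1) ^ 2 := by ring

/-- Triangle inequality for hitting times. -/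
lemma H_tri' {V : Type*} [Fintype V] (G : SimpleGraph V) [DecidableRel G.Adj]
    (hG : G.Connected) (hcard : 1 < Fintype.card V)
    {H : V → V → ℝ} (hH : IsHittingTime G H) (x z y : V) :
    H x y ≤ H x z + H z y := by
  set g : V → ℝ := fun w => H w z + H z y - H w y with hg
  have hsup : ∀ w ∉ ({y, z} : Set V),
      (∑ u ∈ G.neighborFinset w, g u) ≤ (G.degree w : ℝ) * g w := by
    intro w hw
    simp only [Set.mem_insert_iff, Set.mem_singleton_iff, not_or] at hw
    have e1 := mul_rec' G hG hcard hH w z hw.2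
    have e2 := mul_rec' G hG hcard hH w y hw.1
    have e3 : ∑ u ∈ G.neighborFinset w, g u
        = (∑ u ∈ G.neighborFinset w, H u z) + (G.degree w : ℝ) * H z y
          - ∑ u ∈ G.neighborFinset w, H u y := by
      simp only [hg]
      rw [Finset.sum_sub_distrib, Finset.sum_add_distrib, Finset.sum_const, nsmul_eq_mul]
      rfl
    rw [e3]
    simp only [hg, mul_sub, mul_add]
    linarith
  obtain ⟨s, hs, hle⟩ := min_principle' G hG g {y, z} ⟨y, Or.inl rfl⟩ hsup x
  have hgs : 0 ≤ g s := by
    rcases hs with hs | hs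
    · rw [hs]
      have a1 := H_nonneg' G hG hcard hH y z
      have a2 := H_nonneg' G hG hcard hH z y
      simp only [hg, hH.1 y]
      linarith
    · subst hs
      simp [hg, hH.1]
  have : 0 ≤ g x := le_trans hgs hle
  simp only [hg] at this
  linarith

theorem hitting_time_le_cube {V : Type*} [Fintype V] (G : SimpleGraph V)
    [DecidableRel G.Adj] (hG : G.Connected) (H : V → V → ℝ)
    (hH : IsHittingTime G H) (x y : V) :
    H x y ≤ ((Fintype.card V : ℝ) - 1) ^ 3 := by
  classical
  by_cases hcard : 1 < Fintype.card V
  case neg =>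
    have hpos : 0 < Fintype.card V := Fintype.card_pos_iff.mpr hG.nonempty
    have h1 : Fintype.card V = 1 := le_antisymm (not_lt.mp hcard) hpos
    have hxy : x = y := by
      have := Fintype.card_le_one_iff.mp (le_of_eq h1)
      exact this x y
    rw [hxy, hH.1 y, h1]
    norm_num
  case pos =>
    have hn1' : (1:ℝ) < (Fintype.card V : ℝ) := by exact_mod_cast hcard
    set n : ℝ := (Fintype.card V : ℝ) with hn
    have hn1 : 0 ≤ n - 1 := by linarith
    have key : ∀ (u : V) (p : G.Walk u y), H u y ≤ (p.length : ℝ) * (n - 1) ^ 2 := by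
      intro u p
      induction p with
      | nil => simp [hH.1]
      | @cons a b c hab q ih =>
        have h1 := H_tri' G hG hcard hH a b c
        have h2 := H_edge' G hG hcard hH hab
        have h3 : ((q.cons hab).length : ℝ) = (q.length : ℝ) + 1 := by
          rw [SimpleGraph.Walk.length_cons]
          push_cast
          ring
        rw [h3]
        nlinarith [sq_nonneg (n-1)]
    obtain ⟨w⟩ := hG.preconnected x y
    have hp := w.bypass_isPath
    have hlen : w.bypass.length + 1 ≤ Fintype.card V := hp.length_lt
    have hlenR : (w.bypass.length : ℝ) ≤ n - 1 := by
      have h6 : ((w.bypass.length : ℕ) : ℝ) + 1 ≤ (Fintype.card V : ℝ) := by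
        exact_mod_cast hlen
      linarith
    have := key x w.bypass
    calc H x y ≤ (w.bypass.length : ℝ) * (n - 1) ^ 2 := this
      _ ≤ (n - 1) * (n - 1) ^ 2 := by nlinarith [sq_nonneg (n-1)]
      _ = (n - 1) ^ 3 := by ring
end

section
/- For a random walk on a connected simple graph G with n vertices in which every vertex has degree at most k, the hitting time satisfies H(x,y) ≤ k(n-1)^2 for all vertices x, y. -/
/-!
Fix the target `y` and write `f = H(·, y)`. The hitting equation at `x ≠ y` says that the
differences `f x - f z` along the edges at `x` add up to `deg x`; summing over a set `S ∌ y`,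
the edges inside `S` cancel, so the differences along the edges leaving `S` add up to
`∑_{x ∈ S} deg x ≤ k (n - 1)`. Taking for `S` the superlevel set `{u | f v ≤ f u}` of a vertex
with `f v > 0`, all these differences are nonnegative, and connectivity provides an edge leaving
`S`: so some vertex `u` has `f v - k (n - 1) ≤ f u < f v`. Descending this way through the at
most `n - 1` values of `f` below `f v` reaches `0`, whence `f v ≤ k (n - 1)²`.
-/

open Finset

theorem Finset.card_le_card_univ_sub_one {α : Type*} [Fintype α] {s : Finset α} {a : α}
    (ha : a ∉ s) : (#s : ℝ) ≤ Fintype.card α - 1 := by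
  have := card_lt_univ_of_notMem ha
  rw [le_sub_iff_add_le]
  exact_mod_cast this

theorem le_mul_card_filter_lt_of_exists_gap {α : Type*} [Fintype α] {f : α → ℝ} {K : ℝ}
    (hK : 0 ≤ K) (hgap : ∀ v, 0 < f v → ∃ u, f u < f v ∧ f v ≤ f u + K) (v : α) :
    f v ≤ K * #{u | f u < f v} := by
  induction hc : #{u | f u < f v} using Nat.strong_induction_on generalizing v with
  | _ c ih =>
    rcases le_or_gt (f v) 0 with hv | hv
    · exact hv.trans (by positivity)
    obtain ⟨u, hlt, hle⟩ := hgap v hv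
    have hsub : ({w | f w < f u} : Finset α) ⊂ ({w | f w < f v} : Finset α) :=
      ssubset_iff_of_subset (fun w hw => by simpa using (by simpa using hw : f w < f u).trans hlt)
        |>.2 ⟨u, by simpa using hlt, by simp⟩
    have hcard := card_lt_card hsub
    have hu := ih _ (hc ▸ hcard) u rfl
    have hcard' : (#{w | f w < f u} : ℝ) + 1 ≤ c := by exact_mod_cast hc ▸ hcard
    linarith [mul_le_mul_of_nonneg_left hcard' hK]

namespace SimpleGraph

variable {V : Type*} (G : SimpleGraph V) [DecidableRel G.Adj]

theorem sum_sum_filter_adj_sub_eq_zero (f : V → ℝ) (S : Finset V) :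
    ∑ x ∈ S, ∑ z ∈ S with G.Adj x z, (f x - f z) = 0 := by
  have hswap : ∑ x ∈ S, ∑ z ∈ S with G.Adj x z, f z = ∑ z ∈ S, ∑ x ∈ S with G.Adj z x, f z :=
    sum_comm' fun x z => by simp only [mem_filter, G.adj_comm z x]; tauto
  rw [sum_congr rfl fun x _ => sum_sub_distrib .., sum_sub_distrib, hswap, sub_self]

variable [Fintype V] {f : V → ℝ}

theorem sum_neighborFinset_sub_eq_degree {x : V}
    (hx : f x = 1 + (∑ z ∈ G.neighborFinset x, f z) / G.degree x) :
    ∑ z ∈ G.neighborFinset x, (f x - f z) = G.degree x := by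
  rcases (G.degree x).eq_zero_or_pos with hd | hd
  · have hempty : G.neighborFinset x = ∅ := by
      rwa [← card_eq_zero, card_neighborFinset_eq_degree]
    simp [hempty, hd]
  · rw [sum_sub_distrib, sum_const, card_neighborFinset_eq_degree, nsmul_eq_mul]
    have hd' : (G.degree x : ℝ) ≠ 0 := by positivity
    field_simp at hx
    linarith

theorem sum_degree_eq_sum_sum_sdiff_sub [DecidableEq V] (S : Finset V)
    (hS : ∀ x ∈ S, ∑ z ∈ G.neighborFinset x, (f x - f z) = G.degree x) :
    ∑ x ∈ S, (G.degree x : ℝ) = ∑ x ∈ S, ∑ z ∈ G.neighborFinset x \ S, (f x - f z) := by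
  have hsplit : ∀ x ∈ S, (G.degree x : ℝ) =
      ∑ z ∈ S with G.Adj x z, (f x - f z) + ∑ z ∈ G.neighborFinset x \ S, (f x - f z) := by
    intro x hx
    rw [← hS x hx, ← sum_filter_add_sum_filter_not (G.neighborFinset x) (· ∈ S), sdiff_eq_filter]
    congr 2
    ext z
    simp only [mem_filter, mem_neighborFinset]
    tauto
  rw [sum_congr rfl hsplit, sum_add_distrib, sum_sum_filter_adj_sub_eq_zero, zero_add]

theorem exists_lt_le_add_of_hitting_equation (hG : G.Connected) {k : ℕ}
    (hk : ∀ v, G.degree v ≤ k) {y : V}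
    (hf : ∀ x, x ≠ y → f x = 1 + (∑ z ∈ G.neighborFinset x, f z) / G.degree x)
    {v : V} (hv : f y < f v) :
    ∃ u, f u < f v ∧ f v ≤ f u + k * (Fintype.card V - 1) := by
  classical
  set S : Finset V := {u | f v ≤ f u}
  have hyS : y ∉ S := by simpa [S] using hv
  obtain ⟨p⟩ := hG.preconnected v y
  obtain ⟨⟨⟨a, b⟩, hab⟩, -, haS, hbS⟩ := p.exists_boundary_dart S (by simp [S]) hyS
  simp only [mem_coe] at haS hbS
  have hva : f v ≤ f a := by simpa [S] using haS
  have hbv : f b < f v := by simpa [S] using hbS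
  have hboundary_nonneg : ∀ x ∈ S, ∀ z ∈ G.neighborFinset x \ S, 0 ≤ f x - f z := by
    intro x hx z hz
    have hx' : f v ≤ f x := by simpa [S] using hx
    have hz' : f z < f v := by simpa [S] using (mem_sdiff.1 hz).2
    linarith
  have hb : b ∈ G.neighborFinset a \ S := mem_sdiff.2 ⟨(mem_neighborFinset ..).2 hab, hbS⟩
  refine ⟨b, hbv, ?_⟩
  calc f v ≤ f b + (f a - f b) := by linarith
    _ ≤ f b + ∑ x ∈ S, ∑ z ∈ G.neighborFinset x \ S, (f x - f z) := by
      gcongr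
      exact (single_le_sum (hboundary_nonneg a haS) hb).trans
        (single_le_sum (f := fun x => ∑ z ∈ G.neighborFinset x \ S, (f x - f z))
          (fun x hx => sum_nonneg (hboundary_nonneg x hx)) haS)
    _ = f b + ∑ x ∈ S, (G.degree x : ℝ) := by
      rw [sum_degree_eq_sum_sum_sdiff_sub G S fun x hx =>
        G.sum_neighborFinset_sub_eq_degree (hf x (ne_of_mem_of_not_mem hx hyS))]
    _ ≤ f b + #S * k := by
      gcongr
      exact (sum_le_card_nsmul S _ _ fun x _ => by exact_mod_cast hk x).trans_eq
        (nsmul_eq_mul ..)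
    _ ≤ f b + k * (Fintype.card V - 1) := by
      rw [mul_comm]
      gcongr
      exact card_le_card_univ_sub_one hyS

end SimpleGraph

theorem hitting_time_le_of_maxDegree {V : Type*} [Fintype V] (G : SimpleGraph V)
    [DecidableRel G.Adj] (hG : G.Connected) (k : ℕ) (hk : ∀ v, G.degree v ≤ k)
    (H : V → V → ℝ) (hH : IsHittingTime G H) (x y : V) :
    H x y ≤ (k : ℝ) * ((Fintype.card V : ℝ) - 1) ^ 2 := by
  classical
  have hn : (0 : ℝ) ≤ Fintype.card V - 1 :=
    sub_nonneg.2 (by exact_mod_cast Fintype.card_pos_iff.2 ⟨y⟩)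
  have hK : (0 : ℝ) ≤ k * (Fintype.card V - 1) := mul_nonneg k.cast_nonneg hn
  have hgap (v : V) (hv : 0 < H v y) :
      ∃ u, H u y < H v y ∧ H v y ≤ H u y + k * (Fintype.card V - 1) :=
    G.exists_lt_le_add_of_hitting_equation hG hk (fun x hx => hH.2 x y hx) (by rwa [hH.1 y])
  calc H x y ≤ k * (Fintype.card V - 1) * #{u | H u y < H x y} :=
        le_mul_card_filter_lt_of_exists_gap hK hgap x
    _ ≤ k * (Fintype.card V - 1) * (Fintype.card V - 1) := by
        gcongr
        exact card_le_card_univ_sub_one (a := x) (by simp)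
    _ = k * (Fintype.card V - 1) ^ 2 := by ring
end

section
/- Let G be a connected simple graph with m edges and let xy be an edge of G. Then the hitting time satisfies H(x,y) ≤ 2m - d_y, where d_y is the degree of y. -/
open Finset

/-- `c ≤ 0` is what covers `s = ∅`, where the quotient is `0 / 0 = 0`. -/
theorem Finset.le_sum_div_card_of_nonpos {ι 𝕜 : Type*} [Field 𝕜] [LinearOrder 𝕜]
    [IsStrictOrderedRing 𝕜] {s : Finset ι} {f : ι → 𝕜} {c : 𝕜} (hc : c ≤ 0)
    (hf : ∀ i ∈ s, c ≤ f i) : c ≤ (∑ i ∈ s, f i) / #s := by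
  rcases s.eq_empty_or_nonempty with rfl | hs
  · simpa using hc
  · rw [← expect_eq_sum_div_card]
    exact le_expect hs hf

theorem SimpleGraph.sum_sum_neighborFinset {V R : Type*} [Fintype V] [AddCommMonoid R]
    (G : SimpleGraph V) [DecidableRel G.Adj] (f : V → R) :
    ∑ v, ∑ u ∈ G.neighborFinset v, f u = ∑ u, G.degree u • f u := by
  simp_rw [SimpleGraph.neighborFinset_eq_filter, sum_filter]
  rw [sum_comm]
  refine sum_congr rfl fun u _ => ?_
  simp_rw [SimpleGraph.adj_comm _ _ u]
  rw [← sum_filter, ← SimpleGraph.neighborFinset_eq_filter, sum_const,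
    SimpleGraph.card_neighborFinset_eq_degree]

namespace IsHittingTime

variable {V : Type*} [Fintype V] {G : SimpleGraph V} [DecidableRel G.Adj] {H : V → V → ℝ}

/-- For an isolated `v` both sides vanish, since `0 / 0 = 0` in the definition. -/
theorem degree_mul_eq (hH : IsHittingTime G H) {v y : V} (hvy : v ≠ y) :
    G.degree v * H v y = G.degree v + ∑ z ∈ G.neighborFinset v, H z y := by
  rcases eq_or_ne (G.degree v) 0 with hd | hd
  · have : G.neighborFinset v = ∅ := by
      rwa [← card_eq_zero, SimpleGraph.card_neighborFinset_eq_degree]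
    simp [hd, this]
  · rw [hH.2 v y hvy]
    field_simp

theorem nonneg (hH : IsHittingTime G H) (v y : V) : 0 ≤ H v y := by
  obtain ⟨w, -, hw⟩ := exists_min_image univ (H · y) ⟨y, mem_univ y⟩
  refine le_trans ?_ (hw v (mem_univ v))
  -- a negative minimum `H w y` would satisfy `H w y ≥ 1 + H w y`
  by_contra! hneg
  have hwy : w ≠ y := fun h => by simp [h, hH.1] at hneg
  have hmean : H w y ≤ (∑ z ∈ G.neighborFinset w, H z y) / G.degree w := by
    rw [← SimpleGraph.card_neighborFinset_eq_degree]
    exact le_sum_div_card_of_nonpos hneg.le fun z _ => hw z (mem_univ z)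
  linarith [hH.2 w y hwy]

theorem sum_neighborFinset_eq [DecidableEq V] (hH : IsHittingTime G H) (y : V) :
    ∑ z ∈ G.neighborFinset y, H z y = 2 * #G.edgeFinset - G.degree y := by
  have hdouble := G.sum_sum_neighborFinset (H · y)
  have hdegrees : ∑ v, (G.degree v : ℝ) = 2 * #G.edgeFinset := by
    exact_mod_cast G.sum_degrees_eq_twice_card_edges
  have hrest : ∑ v ∈ univ.erase y, G.degree v * H v y
      = ∑ v ∈ univ.erase y, (G.degree v + ∑ z ∈ G.neighborFinset v, H z y) :=
    sum_congr rfl fun v hv => hH.degree_mul_eq (ne_of_mem_erase hv)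
  rw [← add_sum_erase _ _ (mem_univ y), ← add_sum_erase _ _ (mem_univ y)] at hdouble
  rw [← add_sum_erase _ _ (mem_univ y)] at hdegrees
  simp only [nsmul_eq_mul, hH.1 y, mul_zero, zero_add] at hdouble
  rw [sum_add_distrib] at hrest
  linarith

end IsHittingTime

theorem hitting_time_adjacent_le_general {V : Type*} [Fintype V] [DecidableEq V] (G : SimpleGraph V)
    [DecidableRel G.Adj] (H : V → V → ℝ)
    (hH : IsHittingTime G H) (x y : V) (hxy : G.Adj x y) :
    H x y ≤ 2 * (G.edgeFinset.card : ℝ) - (G.degree y : ℝ) := by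
  rw [← hH.sum_neighborFinset_eq y]
  exact single_le_sum (fun z _ => hH.nonneg z y) (G.mem_neighborFinset y x |>.2 hxy.symm)

theorem hitting_time_adjacent_le {V : Type*} [Fintype V] [DecidableEq V] (G : SimpleGraph V)
    [DecidableRel G.Adj] (hG : G.Connected) (H : V → V → ℝ)
    (hH : IsHittingTime G H) (x y : V) (hxy : G.Adj x y) :
    H x y ≤ 2 * (G.edgeFinset.card : ℝ) - (G.degree y : ℝ) :=
  hitting_time_adjacent_le_general G H hH x y hxy
end

section
/- Let G be a connected simple graph on n vertices containing a vertex y of degree n-1. Then for any vertex x, H(x,y) ≤ max{d_u : u ∈ S}, where S is the set of vertices u reachable from x by a path avoiding y. -/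
namespace SimpleGraph.Walk

variable {V : Type*} {G : SimpleGraph V}

lemma exists_isPath_concat_avoiding {x u z y : V} (p : G.Walk x u) (hp : y ∉ p.support)
    (huz : G.Adj u z) (hzy : z ≠ y) : ∃ q : G.Walk x z, q.IsPath ∧ y ∉ q.support := by
  classical
  refine ⟨(p.concat huz).bypass, bypass_isPath _, fun hy => ?_⟩
  have hy' := support_bypass_subset_support _ hy
  rw [support_concat, List.mem_append, List.mem_singleton] at hy'
  exact hy'.elim hp hzy.symm

end SimpleGraph.Walk

section HittingTime

variable {V : Type*} [Fintype V] {G : SimpleGraph V} [DecidableRel G.Adj] {H : V → V → ℝ}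

lemma IsHittingTime.le_degree_of_adj_of_neighbors_le (hH : IsHittingTime G H) {w y : V}
    (hwy : G.Adj w y) (hmax : ∀ z ∈ G.neighborFinset w, z ≠ y → H z y ≤ H w y) :
    H w y ≤ G.degree w := by
  classical
  have hyN : y ∈ G.neighborFinset w := (G.mem_neighborFinset w y).2 hwy
  have hd : 0 < G.degree w := G.degree_pos_iff_exists_adj w |>.2 ⟨y, hwy⟩
  have hd' : (0 : ℝ) < G.degree w := by exact_mod_cast hd
  have hsum : ∑ z ∈ G.neighborFinset w, H z y ≤ ((G.degree w : ℝ) - 1) * H w y := by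
    rw [← Finset.sum_erase_add _ _ hyN, hH.1, add_zero]
    calc ∑ z ∈ (G.neighborFinset w).erase y, H z y
        ≤ ((G.neighborFinset w).erase y).card • H w y :=
          Finset.sum_le_card_nsmul _ _ _ fun z hz => hmax z (Finset.mem_of_mem_erase hz)
            (Finset.ne_of_mem_erase hz)
      _ = ((G.degree w : ℝ) - 1) * H w y := by
          rw [Finset.card_erase_of_mem hyN, G.card_neighborFinset_eq_degree, nsmul_eq_mul,
            Nat.cast_sub hd, Nat.cast_one]
  have hstep : H w y ≤ 1 + ((G.degree w : ℝ) - 1) * H w y / G.degree w := by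
    nth_rewrite 1 [hH.2 w y hwy.ne]
    gcongr
  rw [one_add_div hd'.ne', le_div_iff₀ hd'] at hstep
  linarith

lemma IsHittingTime.le_of_mem_of_forall_adj (hH : IsHittingTime G H) {y : V} {S : Set V}
    (hS_adj : ∀ u ∈ S, G.Adj u y) (hS_closed : ∀ u ∈ S, ∀ z, G.Adj u z → z ≠ y → z ∈ S)
    {k : ℕ} (hk : ∀ u ∈ S, G.degree u ≤ k) {x : V} (hx : x ∈ S) : H x y ≤ k := by
  obtain ⟨w, hwS, hwmax⟩ := S.exists_max_image (H · y) S.toFinite ⟨x, hx⟩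
  have hneighbors : ∀ z ∈ G.neighborFinset w, z ≠ y → H z y ≤ H w y := fun z hz hzy =>
    hwmax z (hS_closed w hwS z ((G.mem_neighborFinset w z).1 hz) hzy)
  calc H x y ≤ H w y := hwmax x hx
    _ ≤ G.degree w := hH.le_degree_of_adj_of_neighbors_le (hS_adj w hwS) hneighbors
    _ ≤ k := by exact_mod_cast hk w hwS

end HittingTime

theorem hitting_time_le_maxDegree_avoiding_general {V : Type*} [Fintype V] (G : SimpleGraph V)
    [DecidableRel G.Adj] (y : V)
    (hy : G.degree y = Fintype.card V - 1)
    (H : V → V → ℝ) (hH : IsHittingTime G H) (x : V)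
    (S : Set V) (hS : S = {u : V | ∃ p : G.Walk x u, p.IsPath ∧ y ∉ p.support})
    (k : ℕ) (hk : ∀ u ∈ S, G.degree u ≤ k) :
    H x y ≤ (k : ℝ) := by
  rcases eq_or_ne x y with rfl | hxy
  · rw [hH.1]
    positivity
  have hy_universal := (G.degree_eq_card_sub_one y).1 hy
  subst hS
  refine hH.le_of_mem_of_forall_adj ?_ ?_ hk ⟨.nil, .nil, by simpa using hxy.symm⟩
  · rintro u ⟨p, -, hyp⟩
    exact (hy_universal fun h => hyp (h ▸ p.end_mem_support)).symm
  · rintro u ⟨p, -, hyp⟩ z huz hzy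
    exact p.exists_isPath_concat_avoiding hyp huz hzy

theorem hitting_time_le_maxDegree_avoiding {V : Type*} [Fintype V] (G : SimpleGraph V)
    [DecidableRel G.Adj] (hG : G.Connected) (y : V)
    (hy : G.degree y = Fintype.card V - 1)
    (H : V → V → ℝ) (hH : IsHittingTime G H) (x : V)
    (S : Set V) (hS : S = {u : V | ∃ p : G.Walk x u, p.IsPath ∧ y ∉ p.support})
    (k : ℕ) (hk : ∀ u ∈ S, G.degree u ≤ k) :
    H x y ≤ (k : ℝ) :=
  hitting_time_le_maxDegree_avoiding_general G y hy H hH x S hS k hk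
end

section
/- Let G be a connected simple graph on n vertices containing a vertex y of degree n-1. Then for any vertex x, H(x,y) ≤ n-1. -/
theorem hitting_time_le_of_dominating {V : Type*} [Fintype V] (G : SimpleGraph V)
    [DecidableRel G.Adj] (hG : G.Connected) (y : V)
    (hy : G.degree y = Fintype.card V - 1)
    (H : V → V → ℝ) (hH : IsHittingTime G H) (x : V) :
    H x y ≤ (Fintype.card V : ℝ) - 1 := by
  classical
  obtain ⟨hH0, hHeq⟩ := hH
  have hcard : 1 ≤ Fintype.card V := Fintype.card_pos_iff.mpr ⟨y⟩
  obtain ⟨x0, -, hx0⟩ := Finset.exists_max_image Finset.univ (fun v => H v y)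
    ⟨y, Finset.mem_univ y⟩
  have hx0max : ∀ v, H v y ≤ H x0 y := fun v => hx0 v (Finset.mem_univ v)
  have key : H x0 y ≤ (Fintype.card V : ℝ) - 1 := by
    by_cases hxy : x0 = y
    · subst hxy
      rw [hH0]
      have : (1:ℝ) ≤ Fintype.card V := by exact_mod_cast hcard
      linarith
    · -- y is adjacent to x0
      have hNy : G.neighborFinset y = Finset.univ.erase y := by
        apply Finset.eq_of_subset_of_card_le
        · intro z hz
          rw [Finset.mem_erase]
          refine ⟨fun h => G.irrefl (by have := (SimpleGraph.mem_neighborFinset G y z).mp hz; rwa [h] at this),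
            Finset.mem_univ z⟩
        · rw [Finset.card_erase_of_mem (Finset.mem_univ y), Finset.card_univ,
            SimpleGraph.card_neighborFinset_eq_degree, hy]
      have hx0mem : x0 ∈ G.neighborFinset y := by
        rw [hNy]; exact Finset.mem_erase.mpr ⟨hxy, Finset.mem_univ x0⟩
      have hadj : G.Adj x0 y := ((SimpleGraph.mem_neighborFinset G y x0).mp hx0mem).symm
      have hyN : y ∈ G.neighborFinset x0 := (SimpleGraph.mem_neighborFinset G x0 y).mpr hadj
      have hdpos : 0 < G.degree x0 := by
        rw [← SimpleGraph.card_neighborFinset_eq_degree]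
        exact Finset.card_pos.mpr ⟨y, hyN⟩
      have hdR : (0:ℝ) < (G.degree x0 : ℝ) := by exact_mod_cast hdpos
      have hsum : ∑ z ∈ G.neighborFinset x0, H z y ≤
          ((G.degree x0 : ℝ) - 1) * H x0 y := by
        rw [← Finset.insert_erase hyN,
          Finset.sum_insert (Finset.notMem_erase _ _), hH0]
        have h1 : ∑ z ∈ (G.neighborFinset x0).erase y, H z y ≤
            ∑ _z ∈ (G.neighborFinset x0).erase y, H x0 y :=
          Finset.sum_le_sum fun z _ => hx0max z
        rw [Finset.sum_const, Finset.card_erase_of_mem hyN,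
          SimpleGraph.card_neighborFinset_eq_degree, nsmul_eq_mul] at h1
        have hc : ((G.degree x0 - 1 : ℕ) : ℝ) = (G.degree x0 : ℝ) - 1 := by
          push_cast [Nat.cast_sub hdpos]; ring
        rw [hc] at h1
        linarith
      have heq := hHeq x0 y hxy
      have h2 : H x0 y * (G.degree x0 : ℝ) =
          (G.degree x0 : ℝ) + ∑ z ∈ G.neighborFinset x0, H z y := by
        rw [heq]; field_simp
      have hMd : H x0 y ≤ (G.degree x0 : ℝ) := by nlinarith [hsum, h2]
      have hdn : G.degree x0 < Fintype.card V := G.degree_lt_card_verts x0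
      have : (G.degree x0 : ℝ) ≤ (Fintype.card V : ℝ) - 1 := by
        have : G.degree x0 + 1 ≤ Fintype.card V := hdn
        have := (Nat.cast_le (α := ℝ)).mpr this
        push_cast at this
        linarith
      linarith
  exact le_trans (hx0max x) key
end

section
/- Let G be a connected simple graph and xy a cut edge of G. Let G' be the subgraph induced by y together with all vertices reachable from x by paths avoiding y. Then H(x,y) = 2|E(G')| - 1. -/
/-!
Let `S` be the side of the bridge containing `x`: every neighbour of a vertex of `S` lies in
`S ∪ {y}`, and `x` is the only vertex of `S` adjacent to `y`. Multiplied by `deg u`, the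
recurrence reads `deg u * H u y = deg u + ∑_{z ~ u} H z y`. Summing over `u ∈ S`, each `H z y`
with `z ∈ S` appears on the right once per neighbour of `z` in `S`, that is `deg z` times, less
once if `z ~ y`; so everything cancels except `H x y = ∑_{u ∈ S} deg u`. In `G'` the vertices
of `S` keep their degree and `y` has degree one, and the handshake lemma turns this sum into
`2 |E(G')| - 1`.
-/

open Finset

namespace SimpleGraph

section Walk

variable {V : Type*} {G : SimpleGraph V} {x y u z : V}

theorem Walk.exists_isPath_notMem_support_of_adj [DecidableEq V] {p : G.Walk x u}
    (hp : y ∉ p.support) (h : G.Adj u z) (hz : z ≠ y) :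
    ∃ q : G.Walk x z, q.IsPath ∧ y ∉ q.support := by
  refine ⟨(p.concat h).bypass, Walk.bypass_isPath _, fun hy => ?_⟩
  have hy' := Walk.support_bypass_subset_support _ hy
  rw [Walk.support_concat, List.mem_append, List.mem_singleton] at hy'
  exact hy'.elim hp hz.symm

theorem IsBridge.eq_of_adj_of_notMem_support (hxy : G.IsBridge s(x, y)) {p : G.Walk x z}
    (hp : y ∉ p.support) (h : G.Adj z y) : z = x := by
  have hmem := isBridge_iff_forall_walk_mem_edges.mp hxy (p.concat h)
  rw [Walk.edges_concat, List.concat_eq_append, List.mem_append, List.mem_singleton] at hmem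
  rcases hmem with hp' | hzy
  · exact absurd (p.snd_mem_support_of_mem_edges hp') hp
  · rcases Sym2.eq_iff.mp hzy with ⟨hxz, -⟩ | ⟨-, hyz⟩
    · exact hxz.symm
    · exact absurd hyz.symm h.ne

end Walk

section Finite

variable {V : Type*} [Fintype V] [DecidableEq V] {G : SimpleGraph V} [DecidableRel G.Adj]

theorem card_neighborFinset_inter_of_subset_insert {S : Finset V} {y z : V} (hy : y ∉ S)
    (hz : G.neighborFinset z ⊆ insert y S) :
    (#(G.neighborFinset z ∩ S) : ℝ) = G.degree z - if G.Adj z y then 1 else 0 := by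
  have herase : G.neighborFinset z ∩ S = (G.neighborFinset z).erase y := by
    ext w
    simp only [mem_inter, mem_erase]
    exact ⟨fun ⟨hw, hwS⟩ => ⟨ne_of_mem_of_not_mem hwS hy, hw⟩,
      fun ⟨hwy, hw⟩ => ⟨hw, (mem_insert.mp (hz hw)).resolve_left hwy⟩⟩
  rw [herase]
  by_cases h : G.Adj z y
  · rw [card_erase_of_mem ((G.mem_neighborFinset z y).mpr h), card_neighborFinset_eq_degree,
      Nat.cast_sub ((G.degree_pos_iff_exists_adj z).mpr ⟨y, h⟩), Nat.cast_one, if_pos h]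
  · rw [erase_eq_of_notMem (by rwa [mem_neighborFinset]), card_neighborFinset_eq_degree,
      if_neg h, sub_zero]

theorem sum_card_neighborFinset_inter_eq_twice_card_edges (T : Finset V) :
    ∑ v ∈ T, #(G.neighborFinset v ∩ T)
      = 2 * Nat.card {e : Sym2 V // e ∈ G.edgeSet ∧ ∀ v ∈ e, v ∈ T} := by
  classical
  set G' := G.deleteEdges {e | ¬∀ v ∈ e, v ∈ T}
  have hedges : {e : Sym2 V // e ∈ G.edgeSet ∧ ∀ v ∈ e, v ∈ T} = G'.edgeSet := by
    rw [edgeSet_deleteEdges]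
    congr
    ext e
    simp
  have hdeg : ∀ v, G'.degree v = if v ∈ T then #(G.neighborFinset v ∩ T) else 0 := by
    intro v
    rw [← card_neighborFinset_eq_degree]
    split_ifs with hv
    · congr 1; ext w; simp [G', hv]
    · rw [card_eq_zero]; ext w; simp [G', hv]
  rw [hedges, Nat.card_eq_fintype_card, ← edgeFinset_card, ← sum_degrees_eq_twice_card_edges]
  simp_rw [hdeg]
  rw [sum_ite_mem, univ_inter]

variable {x y : V} {A : Finset V}

theorem neighborFinset_subset_insert_of_forall_mem_iff
    (hA : ∀ u, u ∈ A ↔ ∃ p : G.Walk x u, p.IsPath ∧ y ∉ p.support) :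
    ∀ u ∈ A, G.neighborFinset u ⊆ insert y A := by
  intro u hu z hz
  obtain ⟨p, -, hp⟩ := (hA u).mp hu
  rw [mem_insert, hA]
  exact or_iff_not_imp_left.mpr
    (p.exists_isPath_notMem_support_of_adj hp ((G.mem_neighborFinset u z).mp hz))

theorem IsBridge.neighborFinset_inter_insert_eq_singleton (hxy : G.IsBridge s(x, y))
    (hadj : G.Adj x y) (hA : ∀ u, u ∈ A ↔ ∃ p : G.Walk x u, p.IsPath ∧ y ∉ p.support) :
    G.neighborFinset y ∩ insert y A = {x} := by
  ext z
  rw [inter_insert_of_notMem (G.notMem_neighborFinset_self y), mem_inter, hA,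
    mem_neighborFinset, mem_singleton]
  constructor
  · rintro ⟨hyz, p, -, hp⟩
    exact hxy.eq_of_adj_of_notMem_support hp hyz.symm
  · rintro rfl
    exact ⟨hadj.symm, Walk.nil, Walk.IsPath.nil, by simpa using hadj.ne'⟩

end Finite

end SimpleGraph

namespace IsHittingTime

open SimpleGraph

variable {V : Type*} [Fintype V] [DecidableEq V] {G : SimpleGraph V} [DecidableRel G.Adj]
  {H : V → V → ℝ}

theorem degree_mul_eq_of_neighborFinset_subset (hH : IsHittingTime G H) {S : Finset V}
    {y u : V} (hu : u ≠ y) (huS : G.neighborFinset u ⊆ insert y S) :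
    G.degree u * H u y = G.degree u + ∑ z ∈ G.neighborFinset u ∩ S, H z y := by
  have hsum : ∑ z ∈ G.neighborFinset u ∩ S, H z y = ∑ z ∈ G.neighborFinset u, H z y := by
    refine sum_subset inter_subset_left fun z hz hzS => ?_
    obtain rfl : z = y :=
      (mem_insert.mp (huS hz)).resolve_right fun h => hzS (mem_inter.mpr ⟨hz, h⟩)
    exact hH.1 z
  rw [hsum, hH.2 u y hu]
  by_cases hd : G.degree u = 0
  · rw [← card_neighborFinset_eq_degree, card_eq_zero] at hd
    simp [hd]
  · rw [mul_add, mul_one, mul_div_cancel₀ _ (Nat.cast_ne_zero.mpr hd)]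

theorem sum_degree_eq_sum_neighborFinset_inter (hH : IsHittingTime G H) {S : Finset V}
    {y : V} (hy : y ∉ S) (hS : ∀ u ∈ S, G.neighborFinset u ⊆ insert y S) :
    ∑ u ∈ S, (G.degree u : ℝ) = ∑ u ∈ G.neighborFinset y ∩ S, H u y := by
  have hswap : ∑ u ∈ S, ∑ z ∈ G.neighborFinset u ∩ S, H z y
      = ∑ z ∈ S, #(G.neighborFinset z ∩ S) * H z y := by
    rw [sum_comm' (t' := S) (s' := fun z => G.neighborFinset z ∩ S)]
    · simp only [sum_const, nsmul_eq_mul]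
    · intro u z
      simp only [mem_inter, mem_neighborFinset, G.adj_comm u z]
      tauto
  have hfilter : {z ∈ S | G.Adj z y} = G.neighborFinset y ∩ S := by
    ext z
    rw [mem_filter, mem_inter, mem_neighborFinset, G.adj_comm, and_comm]
  have key : ∑ u ∈ S, G.degree u * H u y
      = ∑ u ∈ S, (G.degree u : ℝ) + ∑ u ∈ S, G.degree u * H u y
        - ∑ u ∈ G.neighborFinset y ∩ S, H u y :=
    calc ∑ u ∈ S, G.degree u * H u y
        = ∑ u ∈ S, ((G.degree u : ℝ) + ∑ z ∈ G.neighborFinset u ∩ S, H z y) :=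
          sum_congr rfl fun u hu =>
            hH.degree_mul_eq_of_neighborFinset_subset (ne_of_mem_of_not_mem hu hy) (hS u hu)
      _ = ∑ u ∈ S, (G.degree u : ℝ) + ∑ z ∈ S, #(G.neighborFinset z ∩ S) * H z y := by
          rw [sum_add_distrib, hswap]
      _ = ∑ u ∈ S, (G.degree u : ℝ)
            + ∑ z ∈ S, (G.degree z * H z y - if G.Adj z y then H z y else 0) := by
          refine congrArg _ (sum_congr rfl fun z hz => ?_)
          rw [card_neighborFinset_inter_of_subset_insert hy (hS z hz), sub_mul, ite_mul,
            one_mul, zero_mul]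
      _ = _ := by
          rw [sum_sub_distrib, ← sum_filter, hfilter, add_sub_assoc]
  linarith

end IsHittingTime

open SimpleGraph in
theorem hitting_time_cut_edge_general {V : Type*} [Fintype V] (G : SimpleGraph V)
    [DecidableRel G.Adj] (hG : G.Connected) (x y : V) (hxy : G.IsBridge s(x, y))
    (H : V → V → ℝ) (hH : IsHittingTime G H)
    -- S: vertices reachable from x by a path avoiding y
    (S : Set V) (hS : S = {u : V | ∃ p : G.Walk x u, p.IsPath ∧ y ∉ p.support}) :
    H x y = 2 * (Nat.card {e : Sym2 V // e ∈ G.edgeSet ∧ ∀ v ∈ e, v ∈ S ∪ {y}} : ℝ) - 1 := by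
  classical
  have hadj : G.Adj x y := hxy.reachable_iff_adj.mp (hG.preconnected x y)
  set A := S.toFinset
  have hmemA : ∀ u, u ∈ A ↔ ∃ p : G.Walk x u, p.IsPath ∧ y ∉ p.support := by
    simp [A, hS]
  have hyA : y ∉ A := fun hy => ((hmemA y).mp hy).elim fun p hp => hp.2 p.end_mem_support
  have hclosed := neighborFinset_subset_insert_of_forall_mem_iff hmemA
  have hboundary := hxy.neighborFinset_inter_insert_eq_singleton hadj hmemA
  have hdegrees := hH.sum_degree_eq_sum_neighborFinset_inter hyA hclosed
  rw [← inter_insert_of_notMem (G.notMem_neighborFinset_self y), hboundary,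
    sum_singleton] at hdegrees
  have hedges := G.sum_card_neighborFinset_inter_eq_twice_card_edges (insert y A)
  rw [sum_insert hyA, hboundary, card_singleton,
    sum_congr rfl fun u hu => congrArg card (inter_eq_left.mpr (hclosed u hu))] at hedges
  have hT : S ∪ {y} = ↑(insert y A) := by
    ext u
    simp [A]
  rw [hT, ← hdegrees, eq_sub_iff_add_eq, add_comm]
  exact_mod_cast hedges

theorem hitting_time_cut_edge {V : Type*} [Fintype V] [DecidableEq V] (G : SimpleGraph V)
    [DecidableRel G.Adj] (hG : G.Connected) (x y : V) (hxy : G.IsBridge s(x, y))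
    (H : V → V → ℝ) (hH : IsHittingTime G H)
    -- S: vertices reachable from x by a path avoiding y
    (S : Set V) (hS : S = {u : V | ∃ p : G.Walk x u, p.IsPath ∧ y ∉ p.support}) :
    H x y = 2 * (Nat.card {e : Sym2 V // e ∈ G.edgeSet ∧ ∀ v ∈ e, v ∈ S ∪ {y}} : ℝ) - 1 :=
  hitting_time_cut_edge_general G hG x y hxy H hH S hS
end

section
/- Commute time via effective resistance: for any two vertices x, y of a connected graph G, κ(x,y) = H(x,y) + H(y,x) = vol(G) · R_{xy}, where R_{xy} is the effective resistance between x and y when each edge of G has unit resistance. -/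
open Matrix

/-!
Fix a target `t` and put `h_t = H(·, t)`. The hitting-time recursion says exactly that
`(L h_t)(v) = d_v` for `v ≠ t`, and since the entries of any `L f` sum to zero this forces
`L h_t = d - vol(G) 𝟙_t`. Hence `h_y - h_x - vol(G) φ` lies in the kernel of `L`, so it is
constant on the connected graph `G`; comparing its values at `x` and `y`, where
`H x x = H y y = 0`, gives the identity.
-/

namespace SimpleGraph

variable {V : Type*} [Fintype V] [DecidableEq V] (G : SimpleGraph V) [DecidableRel G.Adj]

theorem sum_lapMatrix_mulVec {R : Type*} [CommRing R] (f : V → R) :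
    ∑ v, (G.lapMatrix R *ᵥ f) v = 0 := by
  rw [← one_dotProduct, dotProduct_mulVec, ← mulVec_transpose, (G.isSymm_lapMatrix (R := R)).eq]
  rw [Pi.one_def, G.lapMatrix_mulVec_const_eq_zero, zero_dotProduct]

end SimpleGraph

namespace IsHittingTime

open SimpleGraph

variable {V : Type*} [Fintype V] [DecidableEq V] {G : SimpleGraph V} [DecidableRel G.Adj]
  {H : V → V → ℝ}

theorem lapMatrix_mulVec_apply_of_ne (hH : IsHittingTime G H) (hG : G.Connected) {v t : V}
    (hvt : v ≠ t) : (G.lapMatrix ℝ *ᵥ fun z => H z t) v = G.degree v := by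
  have hdeg : (G.degree v : ℝ) ≠ 0 := by
    exact_mod_cast ((hG.preconnected v t).degree_pos_left hvt).ne'
  rw [lapMatrix_mulVec_apply, hH.2 v t hvt]
  field_simp
  ring

theorem lapMatrix_mulVec (hH : IsHittingTime G H) (hG : G.Connected) (t : V) :
    (G.lapMatrix ℝ *ᵥ fun z => H z t) =
      fun v => G.degree v - (∑ u, (G.degree u : ℝ)) * if v = t then 1 else 0 := by
  ext v
  rcases eq_or_ne v t with rfl | hvt
  · have hsum := G.sum_lapMatrix_mulVec fun z => H z v
    rw [← Finset.add_sum_erase _ _ (Finset.mem_univ v), Finset.sum_congr rfl fun u hu =>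
      hH.lapMatrix_mulVec_apply_of_ne hG (Finset.ne_of_mem_erase hu)] at hsum
    rw [← Finset.add_sum_erase _ _ (Finset.mem_univ v)]
    simp only [if_true]
    linarith
  · simp [hH.lapMatrix_mulVec_apply_of_ne hG hvt, hvt]

end IsHittingTime

/-- The effective resistance $R_{xy}$ is $\varphi(x)-\varphi(y)$ for any potential $\varphi$
with $L\varphi=\mathbf 1_x-\mathbf 1_y$ (unit current from $x$ to $y$). -/
theorem commute_time_eq_vol_mul_resistance {V : Type*} [Fintype V] [DecidableEq V]
    (G : SimpleGraph V) [DecidableRel G.Adj] (hG : G.Connected)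
    (H : V → V → ℝ) (hH : IsHittingTime G H) (x y : V) (φ : V → ℝ)
    (hφ : (G.lapMatrix ℝ) *ᵥ φ =
      fun z => (if z = x then (1 : ℝ) else 0) - (if z = y then (1 : ℝ) else 0)) :
    H x y + H y x = (∑ v : V, (G.degree v : ℝ)) * (φ x - φ y) := by
  set vol : ℝ := ∑ v : V, (G.degree v : ℝ)
  set c : V → ℝ := (fun v => H v y) - (fun v => H v x) - vol • φ
  have hc : G.lapMatrix ℝ *ᵥ c = 0 := by
    simp only [c, mulVec_sub, mulVec_smul, hH.lapMatrix_mulVec hG, hφ]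
    ext v
    simp only [Pi.sub_apply, Pi.smul_apply, smul_eq_mul, Pi.zero_apply]
    ring
  have hcxy : c x = c y :=
    G.lapMatrix_mulVec_eq_zero_iff_forall_reachable.mp hc x y (hG.preconnected x y)
  simp only [c, Pi.sub_apply, Pi.smul_apply, smul_eq_mul, hH.1] at hcxy
  linarith
end

section
/- For the lollipop graph L_{N,N} (a complete graph K_N with a path of N additional vertices attached at one vertex x_N), with N ≥ 2, the hitting time from a vertex x_1 of the clique (x_1 ≠ x_N) to the far endpoint y_N of the path equals N^3 + N - 1. -/
/-- The lollipop graph `L_{N,N}`: a complete graph on the vertices `inl i` (`x_{i+1}`),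
with a path `inr 0, …, inr (N-1)` (`y_1,…,y_N`) attached at `x_N = inl (N-1)`. -/
def lollipop (N : ℕ) : SimpleGraph (Fin N ⊕ Fin N) :=
  SimpleGraph.fromRel (fun a b =>
    match a, b with
    | Sum.inl _, Sum.inl _ => True
    | Sum.inl i, Sum.inr j => i.val = N - 1 ∧ j.val = 0
    | Sum.inr i, Sum.inr j => j.val = i.val + 1
    | Sum.inr _, Sum.inl _ => False)

/-!
By symmetry all clique vertices other than `x_N` have the same hitting time `a`, and the
equations at `x_1` and `x_N` give `a = c + (N - 1)` and `c = N + (N - 1)² + b₀`, where `c` and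
`b₀` are the hitting times from `x_N` and `y_1`. Along the path the walk equations say that the
successive differences of hitting times grow by `2`, so `b₀` is an arithmetic sum starting
from `b₀ - b₁ = N² - N + 3` (read off at `y_1`); adding everything up gives `N³ + N - 1`.
-/

open Finset

lemma IsHittingTime.card_mul_eq_of_neighborFinset_eq {V : Type*} [Fintype V]
    {G : SimpleGraph V} [DecidableRel G.Adj] {H : V → V → ℝ} (hH : IsHittingTime G H)
    {x y : V} (hxy : x ≠ y) {s : Finset V} (hs : G.neighborFinset x = s) :
    #s * H x y = #s + ∑ z ∈ s, H z y := by
  rw [hH.2 x y hxy, ← G.card_neighborFinset_eq_degree, hs]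
  rcases s.eq_empty_or_nonempty with rfl | hne
  · simp
  · field_simp

lemma sub_succ_eq_of_two_mul_eq (b : ℕ → ℝ) (n : ℕ)
    (hb : ∀ k, k + 1 < n → 2 * b (k + 1) = 2 + b k + b (k + 2)) :
    ∀ k < n, b k - b (k + 1) = b 0 - b 1 + 2 * k := by
  intro k hk
  induction k with
  | zero => simp
  | succ k ih =>
    push_cast
    linear_combination ih (by omega) + hb k hk

lemma sub_eq_of_two_mul_eq (b : ℕ → ℝ) (n : ℕ)
    (hb : ∀ k, k + 1 < n → 2 * b (k + 1) = 2 + b k + b (k + 2)) :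
    b 0 - b n = n * (b 0 - b 1) + n * (n - 1) := by
  have hdiff := sub_succ_eq_of_two_mul_eq b n hb
  clear hb
  induction n with
  | zero => simp
  | succ n ih =>
    push_cast
    linear_combination ih (fun k hk => hdiff k (by omega)) + hdiff n (by omega)

section Lollipop

variable {N : ℕ}

@[simp]
lemma lollipop_adj_inl_inl {i j : Fin N} : (lollipop N).Adj (.inl i) (.inl j) ↔ i ≠ j := by
  simp [lollipop]

@[simp]
lemma lollipop_adj_inl_inr {i j : Fin N} :
    (lollipop N).Adj (.inl i) (.inr j) ↔ i.val = N - 1 ∧ j.val = 0 := by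
  simp [lollipop]

@[simp]
lemma lollipop_adj_inr_inl {i j : Fin N} :
    (lollipop N).Adj (.inr j) (.inl i) ↔ i.val = N - 1 ∧ j.val = 0 := by
  simp [lollipop]

@[simp]
lemma lollipop_adj_inr_inr {i j : Fin N} :
    (lollipop N).Adj (.inr i) (.inr j) ↔ j.val = i.val + 1 ∨ i.val = j.val + 1 := by
  simp only [lollipop, SimpleGraph.fromRel_adj, ne_eq, Sum.inr.injEq]
  exact ⟨fun h => h.2, fun h => ⟨by rintro rfl; omega, h⟩⟩

variable [DecidableRel (lollipop N).Adj]

lemma lollipop_neighborFinset_inl {i : Fin N} (hi : i.val ≠ N - 1) :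
    (lollipop N).neighborFinset (.inl i) = (univ.erase i).map .inl := by
  ext (k | k) <;> simp [hi, eq_comm]

lemma lollipop_neighborFinset_inl_last {i : Fin N} (hi : i.val = N - 1) :
    (lollipop N).neighborFinset (.inl i) =
      insert (.inr ⟨0, i.pos⟩) ((univ.erase i).map .inl) := by
  ext (k | k) <;> simp [hi, eq_comm, Fin.ext_iff]

lemma lollipop_neighborFinset_inr_zero (hN : 1 < N) :
    (lollipop N).neighborFinset (.inr ⟨0, by omega⟩) =
      {.inl ⟨N - 1, by omega⟩, .inr ⟨1, hN⟩} := by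
  ext (k | k) <;> simp [Fin.ext_iff, eq_comm]

lemma lollipop_neighborFinset_inr_succ {j : ℕ} (hj : j + 2 < N) :
    (lollipop N).neighborFinset (.inr ⟨j + 1, by omega⟩) =
      {.inr ⟨j, by omega⟩, .inr ⟨j + 2, hj⟩} := by
  ext (k | k) <;> simp [Fin.ext_iff]
  omega

end Lollipop

section LollipopHittingTime

variable {N : ℕ} [DecidableRel (lollipop N).Adj]
  {H : (Fin N ⊕ Fin N) → (Fin N ⊕ Fin N) → ℝ}

lemma IsHittingTime.lollipop_inl (hH : IsHittingTime (lollipop N) H) {i : Fin N}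
    (hi : i.val ≠ N - 1) (t : Fin N) :
    N * H (.inl i) (.inr t) = N - 1 + ∑ k, H (.inl k) (.inr t) := by
  have h := hH.card_mul_eq_of_neighborFinset_eq (y := .inr t) Sum.inl_ne_inr
    (lollipop_neighborFinset_inl hi)
  rw [sum_map, sum_erase_eq_sub (mem_univ i), card_map, card_erase_of_mem (mem_univ i),
    card_univ, Fintype.card_fin, Nat.cast_pred i.pos] at h
  simp only [Function.Embedding.inl_apply] at h
  linear_combination h

lemma IsHittingTime.lollipop_inl_last (hH : IsHittingTime (lollipop N) H) {i : Fin N}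
    (hi : i.val = N - 1) (t : Fin N) :
    (N + 1) * H (.inl i) (.inr t) =
      N + ∑ k, H (.inl k) (.inr t) + H (.inr ⟨0, i.pos⟩) (.inr t) := by
  have h := hH.card_mul_eq_of_neighborFinset_eq (y := .inr t) Sum.inl_ne_inr
    (lollipop_neighborFinset_inl_last hi)
  rw [sum_insert (by simp), card_insert_of_notMem (by simp), sum_map,
    sum_erase_eq_sub (mem_univ i), card_map, card_erase_of_mem (mem_univ i), card_univ,
    Fintype.card_fin, Nat.sub_add_cancel i.pos] at h
  simp only [Function.Embedding.inl_apply] at h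
  linear_combination h

lemma IsHittingTime.lollipop_inr_zero (hH : IsHittingTime (lollipop N) H) (hN : 1 < N)
    {t : Fin N} (ht : t.val ≠ 0) :
    2 * H (.inr ⟨0, by omega⟩) (.inr t) =
      2 + H (.inl ⟨N - 1, by omega⟩) (.inr t) + H (.inr ⟨1, hN⟩) (.inr t) := by
  have h := hH.card_mul_eq_of_neighborFinset_eq (y := .inr t)
    (by simp [Fin.ext_iff, Ne.symm ht])
    (lollipop_neighborFinset_inr_zero hN)
  rw [sum_pair Sum.inl_ne_inr, card_pair Sum.inl_ne_inr] at h
  linear_combination h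

lemma IsHittingTime.lollipop_inr_succ (hH : IsHittingTime (lollipop N) H) {j : ℕ}
    (hj : j + 2 < N) {t : Fin N} (ht : t.val ≠ j + 1) :
    2 * H (.inr ⟨j + 1, by omega⟩) (.inr t) =
      2 + H (.inr ⟨j, by omega⟩) (.inr t) + H (.inr ⟨j + 2, hj⟩) (.inr t) := by
  have hne : (Sum.inr ⟨j, by omega⟩ : Fin N ⊕ Fin N) ≠ .inr ⟨j + 2, hj⟩ := by simp
  have h := hH.card_mul_eq_of_neighborFinset_eq (y := .inr t)
    (by simp [Fin.ext_iff, Ne.symm ht])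
    (lollipop_neighborFinset_inr_succ hj)
  rw [sum_pair hne, card_pair hne] at h
  linear_combination h

lemma IsHittingTime.lollipop_sum_inl (hH : IsHittingTime (lollipop N) H) (hN : 1 < N)
    (t : Fin N) :
    ∑ k, H (.inl k) (.inr t) =
      H (.inl ⟨N - 1, by omega⟩) (.inr t) + (N - 1) * H (.inl ⟨0, by omega⟩) (.inr t) := by
  have hN0 : (N : ℝ) ≠ 0 := by positivity
  have hclique : ∀ k ∈ univ.erase (⟨N - 1, by omega⟩ : Fin N),
      H (.inl k) (.inr t) = H (.inl ⟨0, by omega⟩) (.inr t) := by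
    intro k hk
    have hk : k.val ≠ N - 1 := by simpa [Fin.ext_iff] using ne_of_mem_erase hk
    exact mul_left_cancel₀ hN0 <|
      (hH.lollipop_inl hk t).trans (hH.lollipop_inl (by simp; omega) t).symm
  rw [← add_sum_erase _ _ (mem_univ _), sum_congr rfl hclique, sum_const, card_erase_of_mem
    (mem_univ _), card_univ, Fintype.card_fin, nsmul_eq_mul, Nat.cast_pred (by omega)]

end LollipopHittingTime

theorem lollipop_hitting_time (N : ℕ) (hN : 2 ≤ N)
    [DecidableRel (lollipop N).Adj]
    (H : (Fin N ⊕ Fin N) → (Fin N ⊕ Fin N) → ℝ)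
    (hH : IsHittingTime (lollipop N) H) :
    H (Sum.inl ⟨0, by omega⟩) (Sum.inr ⟨N - 1, by omega⟩) =
      (N : ℝ) ^ 3 + N - 1 := by
  set t : Fin N := ⟨N - 1, by omega⟩
  -- hitting times along the path `y_1, …, y_N`, indexed from `0`, with junk value `0` past `y_N`
  set b : ℕ → ℝ := fun k => if hk : k < N then H (.inr ⟨k, hk⟩) (.inr t) else 0
  have hb : ∀ k (hk : k < N), H (.inr ⟨k, hk⟩) (.inr t) = b k := fun k hk => by
    simp only [b, dif_pos hk]
  have hsum := hH.lollipop_sum_inl hN t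
  have hclique := hH.lollipop_inl (i := ⟨0, by omega⟩) (show 0 ≠ N - 1 by omega) t
  have hlast := hH.lollipop_inl_last (i := t) rfl t
  have hstart := hH.lollipop_inr_zero hN (t := t) (show N - 1 ≠ 0 by omega)
  have hpath := sub_eq_of_two_mul_eq b (N - 1) fun k hk => by
    rw [← hb _ (by omega), ← hb _ (by omega), ← hb _ (by omega)]
    exact hH.lollipop_inr_succ (by omega) (show N - 1 ≠ k + 1 by omega)
  have hend : b (N - 1) = 0 := by rw [← hb _ (by omega)]; exact hH.1 _
  rw [hb, hb] at hstart
  rw [hb] at hlast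
  rw [hend, Nat.cast_pred (by omega)] at hpath
  set a := H (.inl ⟨0, by omega⟩) (.inr t)
  set c := H (.inl t) (.inr t)
  have hac : a = c + (N - 1) := by linear_combination hclique + hsum
  have hc : c = N + (N - 1) ^ 2 + b 0 := by linear_combination hlast + hsum + (N - 1) * hac
  have hb0 : b 0 = (N - 1) * (N ^ 2 - N + 3) + (N - 1) * (N - 2) := by
    linear_combination hpath + (N - 1) * (hstart + hc)
  linear_combination hac + hc + hb0
end
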